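/- For n ≥ 1, lim_{α→∞} β_{n,α}(q) = (-1)^n 2^{-n} q^{n(n-1)/2}. -/

import Mathlib

/-- The q-shifted factorial `(a;q)_n`. -/
noncomputable def qPoch (a q : ℂ) (n : ℕ) : ℂ := ∏ k ∈ Finset.range n, (1 - a * q ^ k)

/-- The q-factorial `[n]_q!`. -/
noncomputable def qFact (q : ℂ) (n : ℕ) : ℂ := qPoch q q n / (1 - q) ^ n

/-- The Gaussian binomial coefficient. -/
noncomputable def qBinom (q : ℂ) (n k : ℕ) : ℂ :=
  qPoch q q n / (qPoch q q k * qPoch q q (n - k))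

/-- `β : ℕ → ℂ` is the sequence of generalized q-Bernoulli numbers `β_{n,α}(q)`:
`β_0 = 1` and for `n ≥ 1`,
`∑_{k=0}^{⌊n/2⌋} (1-q)^{2k} β_{n-2k} / (2^{2k} [n-2k]_q! (q²;q²)_k (q^{2α+2};q²)_k)
  = (-1/2)^n / [n]_q!`. -/
def qBetaSpec (q α : ℝ) (β : ℕ → ℂ) : Prop :=
  β 0 = 1 ∧ ∀ n : ℕ, 1 ≤ n →
    ∑ k ∈ Finset.range (n / 2 + 1),
      ((1 : ℂ) - q) ^ (2 * k) * β (n - 2 * k) /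
        (2 ^ (2 * k) * qFact (q : ℂ) (n - 2 * k) *
          qPoch ((q : ℂ) ^ 2) ((q : ℂ) ^ 2) k *
          qPoch (((q ^ (2 * α + 2) : ℝ) : ℂ)) ((q : ℂ) ^ 2) k)
      = (-1 / 2) ^ n / qFact (q : ℂ) n

open Filter Topology PowerSeries

/-!
As `α → ∞` the factor `(q^{2α+2};q²)_k` tends to `1`, so by strong induction on `n` the numbers
`β_{n,α}` converge to the solution `b_n` of the limiting triangular system. After clearing the
q-factorials, the claim that `b_n = (-1/2)ⁿ q^{n(n-1)/2}` solves that system becomes the identity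
`∑_{m+2k=n} q^{m(m-1)/2} / ((q;q)_m (q²;q²)_k) = 1/(q;q)_n`, i.e. `E_q(x) e_{q²}(x²) = e_q(x)` for
the q-exponentials `e_q(x) = 1/(x;q)_∞` and `E_q(x) = (-x;q)_∞`. As formal power series, `e_q` is
characterised by `e_q(0) = 1` and `e_q(qx) = (1-x) e_q(x)`; the product `E_q(x) e_{q²}(x²)`
inherits this functional equation from `E_q(x) = (1+x) E_q(qx)` and
`e_{q²}(q²x²) = (1-x²) e_{q²}(x²)`.
-/

theorem PowerSeries.coeff_mul_expand {R : Type*} [CommRing R] (p : ℕ) (hp : p ≠ 0)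
    (φ ψ : R⟦X⟧) (n : ℕ) :
    coeff n (φ * expand p hp ψ) =
      ∑ k ∈ Finset.range (n / p + 1), coeff (n - p * k) φ * coeff k ψ := by
  have hp' : 0 < p := Nat.pos_of_ne_zero hp
  have hsub : (Finset.range (n / p + 1)).image (fun k => (n - p * k, p * k)) ⊆
      Finset.HasAntidiagonal.antidiagonal n := by
    intro x hx
    obtain ⟨k, hk, rfl⟩ := Finset.mem_image.mp hx
    have : k * p ≤ n := (Nat.le_div_iff_mul_le hp').mp (by simpa [Nat.lt_succ_iff] using hk)
    rw [Finset.HasAntidiagonal.mem_antidiagonal]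
    lia
  rw [coeff_mul, ← Finset.sum_subset hsub, Finset.sum_image]
  · refine Finset.sum_congr rfl fun k _ => ?_
    simp [coeff_expand, Nat.mul_div_cancel_left _ hp']
  · intro k _ l _ h
    simpa [hp] using congrArg Prod.snd h
  · rintro ⟨i, j⟩ hx hxi
    rw [coeff_expand, if_neg, mul_zero]
    rintro ⟨k, rfl⟩
    rw [Finset.HasAntidiagonal.mem_antidiagonal] at hx
    refine hxi (Finset.mem_image.mpr ⟨k, ?_, by simp [← hx]⟩)
    rw [Finset.mem_range, Nat.lt_succ_iff, Nat.le_div_iff_mul_le hp']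
    lia

theorem PowerSeries.rescale_expand {R : Type*} [CommRing R] (p : ℕ) (hp : p ≠ 0) (a : R)
    (φ : R⟦X⟧) : rescale a (expand p hp φ) = expand p hp (rescale (a ^ p) φ) := by
  ext n
  simp only [coeff_rescale, coeff_expand]
  split_ifs with h
  · obtain ⟨m, rfl⟩ := h
    rw [Nat.mul_div_cancel_left _ (Nat.pos_of_ne_zero hp), pow_mul]
  · rw [mul_zero]

theorem qPoch_succ (a q : ℂ) (n : ℕ) : qPoch a q (n + 1) = qPoch a q n * (1 - a * q ^ n) :=
  Finset.prod_range_succ _ _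

theorem qPoch_self_succ (q : ℂ) (n : ℕ) :
    qPoch q q (n + 1) = qPoch q q n * (1 - q ^ (n + 1)) := by
  rw [qPoch_succ, pow_succ']

theorem qPoch_zero_left (q : ℂ) (n : ℕ) : qPoch 0 q n = 1 := by
  simp [qPoch]

theorem continuous_qPoch (q : ℂ) (n : ℕ) : Continuous fun a => qPoch a q n :=
  continuous_finsetProd _ fun _ _ => by fun_prop

/-- The q-exponential `e_q`. -/
noncomputable def qExpSmall (q : ℂ) : ℂ⟦X⟧ := mk fun n => (qPoch q q n)⁻¹

/-- The q-exponential `E_q`. -/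
noncomputable def qExpBig (q : ℂ) : ℂ⟦X⟧ := mk fun n => q ^ n.choose 2 / qPoch q q n

theorem coeff_succ_mul_of_rescale_eq {q : ℂ} {H : ℂ⟦X⟧} (h : rescale q H = (1 - X) * H)
    (n : ℕ) : coeff (n + 1) H * (1 - q ^ (n + 1)) = coeff n H := by
  have := congrArg (coeff (n + 1)) h
  rw [coeff_rescale, sub_mul, one_mul, map_sub, coeff_succ_X_mul] at this
  linear_combination -this

theorem tendsto_of_forall_sum_range_div_two_eq {ι 𝕜 : Type*} [NormedField 𝕜] {l : Filter ι}
    {c : ι → ℕ → ℕ → 𝕜} {c₀ : ℕ → ℕ → 𝕜} {β : ι → ℕ → 𝕜} {b r : ℕ → 𝕜}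
    (hc : ∀ n k, Tendsto (fun i => c i n k) l (𝓝 (c₀ n k))) (hc₀ : ∀ n, c₀ n 0 ≠ 0)
    (hβ : ∀ᶠ i in l, ∀ n, 1 ≤ n →
      ∑ k ∈ Finset.range (n / 2 + 1), c i n k * β i (n - 2 * k) = r n)
    (hb : ∀ n, 1 ≤ n → ∑ k ∈ Finset.range (n / 2 + 1), c₀ n k * b (n - 2 * k) = r n)
    (h₀ : Tendsto (fun i => β i 0) l (𝓝 (b 0))) (n : ℕ) :
    Tendsto (fun i => β i n) l (𝓝 (b n)) := by
  induction n using Nat.strong_induction_on with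
  | _ n ih =>
  rcases n.eq_zero_or_pos with rfl | hn
  · exact h₀
  have solve : ∀ {d γ : ℕ → 𝕜}, d 0 ≠ 0 →
      ∑ k ∈ Finset.range (n / 2 + 1), d k * γ (n - 2 * k) = r n →
      γ n = (r n - ∑ k ∈ Finset.range (n / 2), d (k + 1) * γ (n - 2 * (k + 1))) / d 0 := by
    intro d γ hd h
    rw [Finset.sum_range_succ', Nat.mul_zero, Nat.sub_zero] at h
    rw [eq_div_iff hd]
    linear_combination h
  have hlim := ((tendsto_const_nhds (x := r n)).sub
    (tendsto_finsetSum (Finset.range (n / 2)) fun k _ =>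
      (hc n (k + 1)).mul (ih (n - 2 * (k + 1)) (by omega)))).div (hc n 0) (hc₀ n)
  rw [solve (hc₀ n) (hb n hn)]
  refine hlim.congr' ?_
  filter_upwards [hβ, (hc n 0).eventually_ne (hc₀ n)] with i hi hi₀
  exact (solve hi₀ (hi n hn)).symm

noncomputable def qBetaCoeff (q x : ℂ) (n k : ℕ) : ℂ :=
  (1 - q) ^ (2 * k) /
    (2 ^ (2 * k) * qFact q (n - 2 * k) * qPoch (q ^ 2) (q ^ 2) k * qPoch x (q ^ 2) k)

theorem sum_qBetaCoeff_mul_of_qBetaSpec {q α : ℝ} {β : ℕ → ℂ} (h : qBetaSpec q α β) (n : ℕ)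
    (hn : 1 ≤ n) :
    ∑ k ∈ Finset.range (n / 2 + 1), qBetaCoeff q (q ^ (2 * α + 2) : ℝ) n k * β (n - 2 * k) =
      (-1 / 2) ^ n / qFact q n := by
  simpa only [qBetaCoeff, div_mul_eq_mul_div] using h.2 n hn

section NotRootOfUnity

variable {q : ℂ} (hq : ¬IsOfFinOrder q)
include hq

theorem one_sub_pow_ne_zero_of_not_isOfFinOrder {n : ℕ} (hn : n ≠ 0) : 1 - q ^ n ≠ 0 :=
  sub_ne_zero.mpr fun h => hq (isOfFinOrder_iff_pow_eq_one.mpr ⟨n, Nat.pos_of_ne_zero hn, h.symm⟩)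

theorem not_isOfFinOrder_sq : ¬IsOfFinOrder (q ^ 2) := by
  simpa [isOfFinOrder_pow] using hq

theorem qPoch_self_ne_zero (n : ℕ) : qPoch q q n ≠ 0 := by
  induction n with
  | zero => simp [qPoch]
  | succ n ih =>
    rw [qPoch_self_succ]
    exact mul_ne_zero ih (one_sub_pow_ne_zero_of_not_isOfFinOrder hq n.succ_ne_zero)

theorem qFact_ne_zero (n : ℕ) : qFact q n ≠ 0 :=
  div_ne_zero (qPoch_self_ne_zero hq n)
    (pow_ne_zero _ (by simpa using one_sub_pow_ne_zero_of_not_isOfFinOrder hq one_ne_zero))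

theorem eq_qExpSmall_of_rescale_eq {H : ℂ⟦X⟧} (h₀ : constantCoeff H = 1)
    (h : rescale q H = (1 - X) * H) : H = qExpSmall q := by
  ext n
  rw [qExpSmall, coeff_mk]
  induction n with
  | zero => simp [h₀, qPoch]
  | succ n ih =>
    have hn := one_sub_pow_ne_zero_of_not_isOfFinOrder hq n.succ_ne_zero
    rw [qPoch_self_succ, mul_inv, ← ih, ← coeff_succ_mul_of_rescale_eq h n]
    field_simp

theorem rescale_qExpSmall : rescale q (qExpSmall q) = (1 - X) * qExpSmall q := by
  ext (_ | n)
  · simp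
  · have hn := one_sub_pow_ne_zero_of_not_isOfFinOrder hq n.succ_ne_zero
    have hP := qPoch_self_ne_zero hq n
    simp only [qExpSmall, coeff_rescale, sub_mul, one_mul, map_sub, coeff_succ_X_mul, coeff_mk,
      qPoch_self_succ]
    field_simp
    ring

theorem qExpBig_eq_mul_rescale : qExpBig q = (1 + X) * rescale q (qExpBig q) := by
  ext (_ | n)
  · rw [add_mul, one_mul, map_add, coeff_zero_X_mul, add_zero, coeff_rescale, pow_zero, one_mul]
  · have hn := one_sub_pow_ne_zero_of_not_isOfFinOrder hq n.succ_ne_zero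
    have hP := qPoch_self_ne_zero hq n
    simp only [qExpBig, coeff_rescale, add_mul, one_mul, map_add, coeff_succ_X_mul, coeff_mk,
      qPoch_self_succ]
    rw [Nat.choose_succ_succ', Nat.choose_one_right, pow_add q n]
    field_simp
    ring

theorem qExpBig_mul_expand_qExpSmall_sq :
    qExpBig q * expand 2 two_ne_zero (qExpSmall (q ^ 2)) = qExpSmall q := by
  have hX : (1 + X : ℂ⟦X⟧) ≠ 0 := fun h => by simpa using congrArg constantCoeff h
  refine eq_qExpSmall_of_rescale_eq hq (by simp [qExpBig, qExpSmall, qPoch]) ?_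
  refine mul_left_cancel₀ hX ?_
  calc (1 + X) * rescale q (qExpBig q * expand 2 two_ne_zero (qExpSmall (q ^ 2)))
      = qExpBig q * expand 2 two_ne_zero (rescale (q ^ 2) (qExpSmall (q ^ 2))) := by
        rw [map_mul, rescale_expand, ← mul_assoc, ← qExpBig_eq_mul_rescale hq]
    _ = (1 + X) * ((1 - X) * (qExpBig q * expand 2 two_ne_zero (qExpSmall (q ^ 2)))) := by
        rw [rescale_qExpSmall (not_isOfFinOrder_sq hq), map_mul, map_sub, map_one, expand_X]
        ring

theorem qBetaCoeff_zero_ne_zero (n : ℕ) : qBetaCoeff q 0 n 0 ≠ 0 := by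
  simpa [qBetaCoeff, qPoch] using qFact_ne_zero hq n

theorem tendsto_qBetaCoeff (n k : ℕ) :
    Tendsto (fun x => qBetaCoeff q x n k) (𝓝 0) (𝓝 (qBetaCoeff q 0 n k)) := by
  refine (continuousAt_const.div (continuousAt_const.mul (continuous_qPoch _ k).continuousAt)
    ?_).tendsto
  simpa [qPoch_zero_left] using
    ⟨qFact_ne_zero hq (n - 2 * k), qPoch_self_ne_zero (not_isOfFinOrder_sq hq) k⟩

theorem sum_qBetaCoeff_zero_mul (n : ℕ) :
    ∑ k ∈ Finset.range (n / 2 + 1), qBetaCoeff q 0 n k *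
        ((-1) ^ (n - 2 * k) * (2 : ℂ)⁻¹ ^ (n - 2 * k) * q ^ ((n - 2 * k) * (n - 2 * k - 1) / 2)) =
      (-1 / 2) ^ n / qFact q n := by
  have h1 : 1 - q ≠ 0 := by simpa using one_sub_pow_ne_zero_of_not_isOfFinOrder hq one_ne_zero
  have hE := congrArg (coeff n) (qExpBig_mul_expand_qExpSmall_sq hq)
  simp only [coeff_mul_expand, qExpSmall, qExpBig, coeff_mk] at hE
  calc _ = ∑ k ∈ Finset.range (n / 2 + 1), (-1 / 2) ^ n * (1 - q) ^ n *
        (q ^ (n - 2 * k).choose 2 / qPoch q q (n - 2 * k) * (qPoch (q ^ 2) (q ^ 2) k)⁻¹) := by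
        refine Finset.sum_congr rfl fun k hk => ?_
        obtain ⟨m, rfl⟩ : ∃ m, n = m + 2 * k := ⟨n - 2 * k, by grind⟩
        have hP := qPoch_self_ne_zero hq m
        have hP2 := qPoch_self_ne_zero (not_isOfFinOrder_sq hq) k
        have h4 : (-1 / 2 : ℂ) ^ (2 * k) * 2 ^ (2 * k) = 1 := by rw [← mul_pow]; norm_num
        have h5 : (-1 : ℂ) ^ m * (1 / 2) ^ m = (-1 / 2) ^ m := by rw [← mul_pow]; norm_num
        rw [qBetaCoeff, Nat.add_sub_cancel, ← Nat.choose_two_right, qFact, qPoch_zero_left]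
        field_simp
        linear_combination (-(q ^ m.choose 2 * (-1 / 2) ^ m * (1 - q) ^ (2 * k) * (1 - q) ^ m)) * h4
          + q ^ m.choose 2 * (1 - q) ^ (2 * k) * (1 - q) ^ m * h5
    _ = (-1 / 2) ^ n / qFact q n := by
        rw [← Finset.mul_sum, hE, qFact]
        field_simp [qPoch_self_ne_zero hq n]

end NotRootOfUnity

/-- For `n ≥ 1`, `lim_{α→∞} β_{n,α}(q) = (-1)^n 2^{-n} q^{n(n-1)/2}`. -/
theorem stmt19 (q : ℝ) (hq : 0 < q) (hq1 : q < 1)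
    (β : ℝ → ℕ → ℂ) (hβ : ∀ α : ℝ, -1 < α → qBetaSpec q α (β α)) :
    ∀ n : ℕ, 1 ≤ n →
      Tendsto (fun α : ℝ => β α n) atTop
        (nhds ((-1) ^ n * ((2 : ℂ))⁻¹ ^ n * (q : ℂ) ^ (n * (n - 1) / 2))) := by
  have hq' : ¬IsOfFinOrder (q : ℂ) := fun h => by
    have := h.norm_eq_one
    rw [Complex.norm_real, Real.norm_of_nonneg hq.le] at this
    linarith
  have hx : Tendsto (fun α : ℝ => ((q ^ (2 * α + 2) : ℝ) : ℂ)) atTop (𝓝 0) := by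
    have := (tendsto_rpow_atTop_of_base_lt_one q (by linarith) hq1).comp
      (tendsto_atTop_add_const_right atTop 2 (tendsto_id.const_mul_atTop two_pos))
    exact (Complex.continuous_ofReal.tendsto' 0 0 Complex.ofReal_zero).comp this
  intro n _
  refine tendsto_of_forall_sum_range_div_two_eq
    (b := fun m => (-1) ^ m * (2 : ℂ)⁻¹ ^ m * (q : ℂ) ^ (m * (m - 1) / 2))
    (fun n k => (tendsto_qBetaCoeff hq' n k).comp hx)
    (qBetaCoeff_zero_ne_zero hq') ?_ (fun n _ => sum_qBetaCoeff_zero_mul hq' n) ?_ n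
  · filter_upwards [eventually_gt_atTop (-1)] with α hα
    exact sum_qBetaCoeff_mul_of_qBetaSpec (hβ α hα)
  · refine tendsto_const_nhds.congr' ?_
    filter_upwards [eventually_gt_atTop (-1)] with α hα
    simp [(hβ α hα).1]
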